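/- Robustness to a misspecified mediator-conditional propensity and sequential regression: if the outcome regression and the marginal propensities are correct, i.e. b̂(m, w) = b(m, w) for all m ∈ 𝕄, w ∈ 𝕎 and π̂₀(w) = π_A(a | w), π̂₁(w) = π_A(a' | w) for all w ∈ 𝕎, then for arbitrary π̂ᴹ₀, π̂ᴹ₁ : 𝕄 × 𝕎 → (0, 1) and arbitrary ξ̂ : 𝕎 → ℝ the AIPW functional is exactly unbiased: Ψ(π̂, b̂, ξ̂) = ψ. (Population version of Corollary 1, case (ii).) -/

import Mathlib

/-!
Split `Ψ` into its three terms. The first is a weighted residual `Ŷ - b(M, W)` that is supported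
on `{A = a}`, where `b` is the mean of `Ŷ` on each cell `{A = a, M = m, W = w}`; it therefore
integrates to zero whatever the weights `π̂₀` and `r̂` are. With `π̂₁ = π_A(a' | ·)` the inverse
weighting in the second term turns `P(A = a', M = m, W = w)` into
`P(W = w) · P(M = m | A = a', W = w)`, so that term is `∑ w, P(W = w) (ξ(w) - ξ̂(w))`; positivity
makes `P[| A = a', W = w]` a probability measure, which is what produces the `- ξ̂(w)`. The last
term `E[ξ̂(W)]` cancels it.
-/

open MeasureTheory ProbabilityTheory

section
variable {Ω : Type*} [MeasurableSpace Ω] {P : Measure Ω}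

/-- If `P s = 0` both sides vanish, since `P[|s] = 0` and `x / 0 = 0`. -/
lemma toReal_cond_apply {s : Set Ω} (hs : MeasurableSet s) (t : Set Ω) :
    (P[|s] t).toReal = P.real (s ∩ t) / P.real s := by
  rw [cond_apply hs, ENNReal.toReal_mul, ENNReal.toReal_inv, inv_mul_eq_div]
  rfl

lemma measureReal_inter_div_toReal_cond {s t : Set Ω} (hs : MeasurableSet s)
    (ht : MeasurableSet t) (u : Set Ω) :
    P.real (t ∩ s ∩ u) / (P[|s] t).toReal = P.real s * (P[|t ∩ s] u).toReal := by
  rw [toReal_cond_apply hs, toReal_cond_apply (ht.inter hs), Set.inter_comm s t,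
    div_div_eq_mul_div]
  ring

variable {ι : Type*} [Fintype ι] [MeasurableSpace ι] [MeasurableSingletonClass ι]
  {X : Ω → ι}

lemma Integrable.comp_mul_of_fintype {Y : Ω → ℝ} (hY : Integrable Y P) (hX : Measurable X)
    (g : ι → ℝ) : Integrable (fun ω => g (X ω) * Y ω) P :=
  hY.bdd_mul (c := ∑ i, ‖g i‖) ((measurable_of_finite g).comp hX).aestronglyMeasurable
    (ae_of_all _ fun _ =>
      Finset.single_le_sum (f := fun i => ‖g i‖) (fun _ _ => norm_nonneg _) (Finset.mem_univ _))

lemma integral_eq_sum_setIntegral_preimage {f : Ω → ℝ} (hX : Measurable X)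
    (hf : Integrable f P) : ∫ ω, f ω ∂P = ∑ i, ∫ ω in X ⁻¹' {i}, f ω ∂P := by
  rw [← integral_iUnion_fintype (fun i => hX (measurableSet_singleton i))
    (pairwise_disjoint_fiber X) fun i => hf.integrableOn, ← Set.preimage_iUnion,
    Set.iUnion_of_singleton, Set.preimage_univ, setIntegral_univ]

variable [IsFiniteMeasure P]

lemma measureReal_mul_integral_cond (s : Set Ω) (Y : Ω → ℝ) :
    P.real s * ∫ ω, Y ω ∂P[|s] = ∫ ω in s, Y ω ∂P := by
  rcases eq_or_ne (P s) 0 with hs | hs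
  · simp [measureReal_def, hs]
  · rw [ProbabilityTheory.cond, integral_smul_measure, smul_eq_mul, ← mul_assoc,
      ENNReal.toReal_inv, measureReal_def,
      mul_inv_cancel₀ (ENNReal.toReal_ne_zero.mpr ⟨hs, measure_ne_top P s⟩), one_mul]

lemma sum_toReal_cond_preimage_singleton (hX : Measurable X) {s : Set Ω} (hs : P s ≠ 0) :
    ∑ i, (P[|s] (X ⁻¹' {i})).toReal = 1 := by
  have := cond_isProbabilityMeasure (μ := P) hs
  exact (sum_measureReal_preimage_singleton _ fun i _ => hX (measurableSet_singleton i)).trans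
    (by simp)

lemma integrable_comp_of_fintype (hX : Measurable X) (f : ι → ℝ) :
    Integrable (fun ω => f (X ω)) P :=
  Integrable.of_finite.comp_measurable hX

lemma integral_comp_eq_sum (hX : Measurable X) (f : ι → ℝ) :
    ∫ ω, f (X ω) ∂P = ∑ i, P.real {ω | X ω = i} * f i := by
  rw [← integral_map hX.aemeasurable (by fun_prop), integral_fintype Integrable.of_finite]
  simp_rw [map_measureReal_apply hX (measurableSet_singleton _), smul_eq_mul]
  rfl

lemma integral_mul_sub_eq_zero_of_eq_integral_cond (hX : Measurable X) {Y : Ω → ℝ}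
    (hY : Integrable Y P) (g c : ι → ℝ)
    (hc : ∀ i, g i ≠ 0 → c i = ∫ ω, Y ω ∂P[|X ⁻¹' {i}]) :
    ∫ ω, g (X ω) * (Y ω - c (X ω)) ∂P = 0 := by
  have hint : Integrable (fun ω => g (X ω) * (Y ω - c (X ω))) P :=
    Integrable.comp_mul_of_fintype (hY.sub (integrable_comp_of_fintype hX c)) hX g
  rw [integral_eq_sum_setIntegral_preimage hX hint]
  refine Finset.sum_eq_zero fun i _ => ?_
  calc ∫ ω in X ⁻¹' {i}, g (X ω) * (Y ω - c (X ω)) ∂P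
      = ∫ ω in X ⁻¹' {i}, g i * (Y ω - c i) ∂P :=
        setIntegral_congr_fun (hX (measurableSet_singleton i)) fun ω (hω : X ω = i) => by
          rw [hω]
    _ = g i * (∫ ω in X ⁻¹' {i}, Y ω ∂P - P.real (X ⁻¹' {i}) * c i) := by
        rw [integral_const_mul, integral_sub hY.integrableOn (integrable_const _),
          setIntegral_const, smul_eq_mul]
    _ = 0 := by
        rcases eq_or_ne (g i) 0 with hg | hg
        · rw [hg, zero_mul]
        · rw [hc i hg, measureReal_mul_integral_cond, sub_self, mul_zero]

variable {β 𝕄 𝕎 : Type*} [Fintype β] [DecidableEq β] [MeasurableSpace β]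
  [MeasurableSingletonClass β] [Fintype 𝕄] [MeasurableSpace 𝕄] [MeasurableSingletonClass 𝕄]
  [Fintype 𝕎] [MeasurableSpace 𝕎] [MeasurableSingletonClass 𝕎]
  {A : Ω → β} {M : Ω → 𝕄} {W : Ω → 𝕎}

lemma integral_ite_div_cond_mul_eq_sum (hA : Measurable A) (hM : Measurable M)
    (hW : Measurable W) (a : β) (h : 𝕄 → 𝕎 → ℝ) :
    ∫ ω, (if A ω = a then (1 : ℝ) else 0) / (P[|{ω' | W ω' = W ω}] {ω' | A ω' = a}).toReal
        * h (M ω) (W ω) ∂P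
      = ∑ w, P.real {ω | W ω = w}
          * ∑ m, h m w * (P[|{ω | A ω = a ∧ W ω = w}] {ω | M ω = m}).toReal := by
  set π : 𝕎 → ℝ := fun w => (P[|{ω | W ω = w}] {ω | A ω = a}).toReal
  have hcell : ∀ m w, {ω | A ω = a ∧ M ω = m ∧ W ω = w}
      = {ω | A ω = a ∧ W ω = w} ∩ {ω | M ω = m} := by
    intro m w; ext ω; simp only [Set.mem_ofPred_eq, Set.mem_inter_iff]; tauto
  calc _ = ∑ x : β × 𝕄 × 𝕎, P.real {ω | (A ω, M ω, W ω) = x}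
          * ((if x.1 = a then (1 : ℝ) else 0) / π x.2.2 * h x.2.1 x.2.2) :=
        integral_comp_eq_sum (hA.prodMk (hM.prodMk hW)) _
    _ = ∑ m, ∑ w, P.real ({ω | A ω = a ∧ W ω = w} ∩ {ω | M ω = m}) / π w * h m w := by
        simp [Fintype.sum_prod_type, hcell, ite_mul, mul_ite, div_eq_mul_inv, mul_assoc]
    _ = _ := by
        rw [Finset.sum_comm]
        refine Finset.sum_congr rfl fun w _ => ?_
        rw [Finset.mul_sum]
        refine Finset.sum_congr rfl fun m _ => ?_
        have hchain : P.real ({ω | A ω = a ∧ W ω = w} ∩ {ω | M ω = m}) / π w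
            = P.real {ω | W ω = w} * (P[|{ω | A ω = a ∧ W ω = w}] {ω | M ω = m}).toReal :=
          measureReal_inter_div_toReal_cond (hW (measurableSet_singleton w))
            (hA (measurableSet_singleton a)) _
        rw [hchain]
        ring

end

theorem aipw_robust_to_mediator_propensity_and_seqreg_general
    {Ω : Type*} [MeasurableSpace Ω] (P : Measure Ω) [IsProbabilityMeasure P]
    {𝕄 𝕎 : Type*} [Fintype 𝕄] [Nonempty 𝕄] [MeasurableSpace 𝕄] [MeasurableSingletonClass 𝕄]
    [Fintype 𝕎] [MeasurableSpace 𝕎] [MeasurableSingletonClass 𝕎]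
    (A : Ω → Bool) (M : Ω → 𝕄) (W : Ω → 𝕎)
    (hA : Measurable A) (hM : Measurable M) (hW : Measurable W)
    (positivity : ∀ (α : Bool) (m : 𝕄) (w : 𝕎),
      0 < P {ω | A ω = α ∧ M ω = m ∧ W ω = w})
    (a a' : Bool)
    (Y : Ω → ℝ) (hY_meas : Measurable Y) (hY_bdd : ∃ C : ℝ, ∀ ω, |Y ω| ≤ C)
    (πA : Bool → 𝕎 → ℝ)
    (hπA : ∀ (α : Bool) (w : 𝕎), πA α w = ((P[|{ω | W ω = w}]) {ω | A ω = α}).toReal)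
    (b : 𝕄 → 𝕎 → ℝ)
    (hb : ∀ (m : 𝕄) (w : 𝕎),
      b m w = ∫ ω, Y ω ∂(P[|{ω | A ω = a ∧ M ω = m ∧ W ω = w}]))
    (ξ : 𝕎 → ℝ)
    (hξ : ∀ w : 𝕎,
      ξ w = ∑ m : 𝕄, b m w * ((P[|{ω | A ω = a' ∧ W ω = w}]) {ω | M ω = m}).toReal)
    (ψ : ℝ) (hψ : ψ = ∑ w : 𝕎, (P {ω | W ω = w}).toReal * ξ w)
    -- estimated nuisance functions
    (πhat₀ πhat₁ : 𝕎 → ℝ)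
    (bhat : 𝕄 → 𝕎 → ℝ) (ξhat : 𝕎 → ℝ)
    (rhat : 𝕄 → 𝕎 → ℝ)
    (Ψhat : ℝ)
    (hΨhat : Ψhat = ∫ ω,
        ((if A ω = a then (1 : ℝ) else 0) / πhat₀ (W ω)) * rhat (M ω) (W ω)
            * (Y ω - bhat (M ω) (W ω))
          + ((if A ω = a' then (1 : ℝ) else 0) / πhat₁ (W ω))
            * (bhat (M ω) (W ω) - ξhat (W ω))
          + ξhat (W ω) ∂P)
    -- correctness of the outcome regression and marginal propensities
    (hcorrect_b : ∀ (m : 𝕄) (w : 𝕎), bhat m w = b m w)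
    (hcorrect₁ : ∀ w : 𝕎, πhat₁ w = πA a' w) :
    Ψhat = ψ := by
  obtain ⟨C, hC⟩ := hY_bdd
  have hY : Integrable Y P := .of_bound hY_meas.aestronglyMeasurable C (ae_of_all _ hC)
  have hX : Measurable fun ω => (A ω, M ω, W ω) := hA.prodMk (hM.prodMk hW)
  let g : Bool × 𝕄 × 𝕎 → ℝ := fun x =>
    (if x.1 = a then 1 else 0) / πhat₀ x.2.2 * rhat x.2.1 x.2.2
  have hT1 : Integrable (fun ω => g (A ω, M ω, W ω) * (Y ω - b (M ω) (W ω))) P :=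
    Integrable.comp_mul_of_fintype
      (hY.sub (integrable_comp_of_fintype (hM.prodMk hW) fun x => b x.1 x.2)) hX g
  have hT2 := integrable_comp_of_fintype (P := P) hX fun x =>
    (if x.1 = a' then (1 : ℝ) else 0) / πhat₁ x.2.2 * (b x.2.1 x.2.2 - ξhat x.2.2)
  have h_resid : ∫ ω, g (A ω, M ω, W ω) * (Y ω - b (M ω) (W ω)) ∂P = 0 := by
    refine integral_mul_sub_eq_zero_of_eq_integral_cond hX hY g (fun x => b x.2.1 x.2.2) ?_
    rintro ⟨α, m, w⟩ hg
    obtain rfl : α = a := by by_contra hα; exact hg (by simp [g, hα])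
    rw [hb]; congr; ext; simp
  have h_ipw := integral_ite_div_cond_mul_eq_sum (P := P) hA hM hW a' fun m w => b m w - ξhat w
  have hq : ∀ w, ∑ m, (P[|{ω | A ω = a' ∧ W ω = w}] {ω | M ω = m}).toReal = 1 := by
    intro w
    obtain ⟨m⟩ := ‹Nonempty 𝕄›
    have hsub : {ω | A ω = a' ∧ M ω = m ∧ W ω = w} ⊆ {ω | A ω = a' ∧ W ω = w} :=
      fun ω h => ⟨h.1, h.2.2⟩
    exact sum_toReal_cond_preimage_singleton hM
      ((positivity a' m w).trans_le (measure_mono hsub)).ne'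
  simp only [hcorrect_b, hcorrect₁, hπA] at hΨhat hT2
  rw [hΨhat, integral_add ?_ (integrable_comp_of_fintype hW ξhat), integral_add hT1 hT2,
    h_resid, h_ipw, integral_comp_eq_sum hW ξhat, hψ, zero_add, ← Finset.sum_add_distrib]
  · refine Finset.sum_congr rfl fun w _ => ?_
    simp only [hξ w, sub_mul, Finset.sum_sub_distrib, ← Finset.mul_sum, hq w, measureReal_def]
    ring
  · exact hT1.add hT2

/-- Population version of Corollary 1, case (ii): if the outcome regression and
the marginal propensities are correct, the AIPW functional is exactly unbiased
for arbitrary mediator-conditional propensities and arbitrary `ξ̂`. -/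
theorem aipw_robust_to_mediator_propensity_and_seqreg
    {Ω : Type*} [MeasurableSpace Ω] (P : Measure Ω) [IsProbabilityMeasure P]
    {𝕄 𝕎 : Type*} [Fintype 𝕄] [Nonempty 𝕄] [MeasurableSpace 𝕄] [MeasurableSingletonClass 𝕄]
    [Fintype 𝕎] [Nonempty 𝕎] [MeasurableSpace 𝕎] [MeasurableSingletonClass 𝕎]
    (A : Ω → Bool) (M : Ω → 𝕄) (W : Ω → 𝕎)
    (hA : Measurable A) (hM : Measurable M) (hW : Measurable W)
    (positivity : ∀ (α : Bool) (m : 𝕄) (w : 𝕎),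
      0 < P {ω | A ω = α ∧ M ω = m ∧ W ω = w})
    (a a' : Bool)
    (Y : Ω → ℝ) (hY_meas : Measurable Y) (hY_bdd : ∃ C : ℝ, ∀ ω, |Y ω| ≤ C)
    (πA : Bool → 𝕎 → ℝ)
    (hπA : ∀ (α : Bool) (w : 𝕎), πA α w = ((P[|{ω | W ω = w}]) {ω | A ω = α}).toReal)
    (b : 𝕄 → 𝕎 → ℝ)
    (hb : ∀ (m : 𝕄) (w : 𝕎),
      b m w = ∫ ω, Y ω ∂(P[|{ω | A ω = a ∧ M ω = m ∧ W ω = w}]))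
    (ξ : 𝕎 → ℝ)
    (hξ : ∀ w : 𝕎,
      ξ w = ∑ m : 𝕄, b m w * ((P[|{ω | A ω = a' ∧ W ω = w}]) {ω | M ω = m}).toReal)
    (ψ : ℝ) (hψ : ψ = ∑ w : 𝕎, (P {ω | W ω = w}).toReal * ξ w)
    -- estimated nuisance functions
    (πhat₀ πhat₁ : 𝕎 → ℝ)
    (hπhat₀ : ∀ w : 𝕎, πhat₀ w ∈ Set.Ioo (0 : ℝ) 1)
    (hπhat₁ : ∀ w : 𝕎, πhat₁ w ∈ Set.Ioo (0 : ℝ) 1)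
    (πMhat₀ πMhat₁ : 𝕄 → 𝕎 → ℝ)
    (hπMhat₀ : ∀ (m : 𝕄) (w : 𝕎), πMhat₀ m w ∈ Set.Ioo (0 : ℝ) 1)
    (hπMhat₁ : ∀ (m : 𝕄) (w : 𝕎), πMhat₁ m w ∈ Set.Ioo (0 : ℝ) 1)
    (bhat : 𝕄 → 𝕎 → ℝ) (ξhat : 𝕎 → ℝ)
    (rhat : 𝕄 → 𝕎 → ℝ)
    (hrhat : ∀ (m : 𝕄) (w : 𝕎),
      rhat m w = (πMhat₁ m w * πhat₀ w) / (πMhat₀ m w * πhat₁ w))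
    (Ψhat : ℝ)
    (hΨhat : Ψhat = ∫ ω,
        ((if A ω = a then (1 : ℝ) else 0) / πhat₀ (W ω)) * rhat (M ω) (W ω)
            * (Y ω - bhat (M ω) (W ω))
          + ((if A ω = a' then (1 : ℝ) else 0) / πhat₁ (W ω))
            * (bhat (M ω) (W ω) - ξhat (W ω))
          + ξhat (W ω) ∂P)
    -- correctness of the outcome regression and marginal propensities
    (hcorrect_b : ∀ (m : 𝕄) (w : 𝕎), bhat m w = b m w)
    (hcorrect₀ : ∀ w : 𝕎, πhat₀ w = πA a w)
    (hcorrect₁ : ∀ w : 𝕎, πhat₁ w = πA a' w) :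
    Ψhat = ψ :=
  aipw_robust_to_mediator_propensity_and_seqreg_general P A M W hA hM hW positivity a a' Y hY_meas
    hY_bdd πA hπA b hb ξ hξ ψ hψ πhat₀ πhat₁ bhat ξhat rhat Ψhat hΨhat hcorrect_b hcorrect₁
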